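/- Define the Wick submonomials B_{aμ} = −f_{abc} u_b v_{cμ}, C_{aμ} = f_{abc}(v_b^ν F_{cνμ} − u_b ∂_μ ũ_c), D_a = f_{abc} v_b^μ ∂_μ ũ_c, E_{aμν} = f_{abc} v_{bμ} v_{cν}, C_{aνμ}' = −f_{abc} u_b F_{cνμ}, and B_a = (1/2) f_{abc} u_b u_c. Then modulo equations of motion: d_Q B_a^μ = i ∂^μ B_a, d_Q D_a = −i ∂_μ C_a^μ, d_Q C_a^μ = i ∂_ν C_a'^{μν}, d_Q E_a^{μν} = i(∂^ν B_a^μ − ∂^μ B_a^ν + C_a'^{μν}), d_Q B_a = 0, and d_Q C_a'^{μν} = 0. -/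

import Mathlib

/-!
Each identity is checked summand by summand in the colour indices `b, c`. Because `f_{abc}` is
antisymmetric in `b, c`, the double sum `∑ b c, f_{abc} X_{bc}` only sees the antisymmetric part
of `X`, so two sides agree as soon as their summands differ by a term symmetric in `b, c`: this
absorbs the anticommutation of ghosts and terms like `∂_μ v_b^ν ∂_ν v_c^μ`, which are symmetric
because even elements are central. `d_Q F = 0` since partial derivatives commute, and the
equations of motion enter only through `∂_ν F^{μν} = ∂^μ (∂·v)` and `□ũ = 0`.
-/

open scoped BigOperators

/-- The diagonal of the Minkowski metric `η = diag(1,−1,−1,−1)`. -/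
noncomputable def minkEta : Fin 4 → ℝ := ![1, -1, -1, -1]

open Finset

section AntisymmetricSums

variable {ι κ R M : Type*} [Fintype ι] [Fintype κ] [Ring R] [AddCommGroup M] [Module R M]
  {F : ι → ι → R}

theorem sum_sum_smul_eq_neg_swap (hF : ∀ b c, F b c = -F c b) (g : ι → ι → M) :
    ∑ b, ∑ c, F b c • g b c = -∑ b, ∑ c, F b c • g c b := by
  rw [sum_comm, ← sum_neg_distrib]
  refine sum_congr rfl fun b _ => ?_
  rw [← sum_neg_distrib]
  exact sum_congr rfl fun c _ => by rw [hF, neg_smul]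

theorem sum_sum_smul_eq_zero_of_symm [IsAddTorsionFree M] (hF : ∀ b c, F b c = -F c b)
    {g : ι → ι → M} (hg : ∀ b c, g b c = g c b) : ∑ b, ∑ c, F b c • g b c = 0 := by
  refine self_eq_neg.mp ((sum_sum_smul_eq_neg_swap hF g).trans ?_)
  simp only [← hg]

theorem sum_sum_smul_eq_of_sub_symm [IsAddTorsionFree M] (hF : ∀ b c, F b c = -F c b)
    {X Y : ι → ι → M} (h : ∀ b c, X b c - Y b c = X c b - Y c b) :
    ∑ b, ∑ c, F b c • X b c = ∑ b, ∑ c, F b c • Y b c := by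
  rw [← sub_eq_zero, ← sum_sub_distrib]
  simp only [← sum_sub_distrib, ← smul_sub]
  exact sum_sum_smul_eq_zero_of_symm hF h

theorem smul_sum_sum_smul {S : Type*} [Monoid S] [DistribMulAction S M] [SMulCommClass S R M]
    (s : S) (g : ι → ι → M) :
    s • ∑ b, ∑ c, F b c • g b c = ∑ b, ∑ c, F b c • s • g b c := by
  simp only [smul_sum, smul_comm s]

theorem sum_sum_smul_sum (g : ι → ι → κ → M) :
    ∑ b, ∑ c, F b c • ∑ μ, g b c μ = ∑ μ, ∑ b, ∑ c, F b c • g b c μ := by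
  simp only [smul_sum]
  conv_rhs => rw [sum_comm]
  exact sum_congr rfl fun b _ => sum_comm

end AntisymmetricSums

noncomputable section YangMills

variable {r : ℕ} {A : Type*} [Ring A] [Algebra ℂ A]
  (f : Fin r → Fin r → Fin r → ℝ) (d : Fin 4 → Module.End ℂ A) (dQ : Module.End ℂ A)
  (v : Fin r → Fin 4 → A) (u ut : Fin r → A)

theorem minkEta_mul_self (μ : Fin 4) : (minkEta μ : ℂ) * minkEta μ = 1 := by
  fin_cases μ <;> norm_num [minkEta]

/- `v c μ` is `v_c^μ` and `d μ` is `∂_μ`; a factor `minkEta μ` raises the index of `∂_μ`, so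
`fieldStrength d v c μ ν` is `F_c^{μν}`. -/
def fieldStrength (c : Fin r) (μ ν : Fin 4) : A :=
  (minkEta μ : ℂ) • d μ (v c ν) - (minkEta ν : ℂ) • d ν (v c μ)

def fieldDivergence (c : Fin r) : A := ∑ μ, d μ (v c μ)

def wickB (a : Fin r) : A := (1 / 2 : ℂ) • ∑ b, ∑ c, (f a b c : ℂ) • (u b * u c)

def wickBVec (a : Fin r) (μ : Fin 4) : A := -∑ b, ∑ c, (f a b c : ℂ) • (u b * v c μ)

def wickCVec (a : Fin r) (μ : Fin 4) : A :=
  ∑ b, ∑ c, (f a b c : ℂ) • ((∑ ν, (minkEta ν : ℂ) • (v b ν * fieldStrength d v c ν μ)) -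
    (minkEta μ : ℂ) • (u b * d μ (ut c)))

def wickD (a : Fin r) : A := ∑ b, ∑ c, (f a b c : ℂ) • ∑ μ, v b μ * d μ (ut c)

def wickE (a : Fin r) (μ ν : Fin 4) : A := ∑ b, ∑ c, (f a b c : ℂ) • (v b μ * v c ν)

def wickC' (a : Fin r) (μ ν : Fin 4) : A :=
  -∑ b, ∑ c, (f a b c : ℂ) • (u b * fieldStrength d v c μ ν)

variable {f d dQ v u ut} {ev od : Set A}

theorem fieldStrength_swap (c : Fin r) (μ ν : Fin 4) :
    fieldStrength d v c ν μ = -fieldStrength d v c μ ν :=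
  (neg_sub _ _).symm

theorem dQ_fieldStrength (hdd : ∀ μ ν x, d μ (d ν x) = d ν (d μ x))
    (hdQd : ∀ μ x, dQ (d μ x) = d μ (dQ x))
    (hdQv : ∀ a μ, dQ (v a μ) = (minkEta μ : ℂ) • (Complex.I • d μ (u a)))
    (c : Fin r) (μ ν : Fin 4) : dQ (fieldStrength d v c μ ν) = 0 := by
  simp only [fieldStrength, map_sub, map_smul, hdQd, hdQv, hdd μ ν]
  module

theorem sum_d_fieldStrength (hdd : ∀ μ ν x, d μ (d ν x) = d ν (d μ x))
    (eomv : ∀ a ν, ∑ μ, (minkEta μ : ℂ) • d μ (d μ (v a ν)) = 0) (c : Fin r) (μ : Fin 4) :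
    ∑ ν, d ν (fieldStrength d v c μ ν) = (minkEta μ : ℂ) • d μ (fieldDivergence d v c) := by
  simp only [fieldStrength, fieldDivergence, map_sub, map_smul, sum_sub_distrib, eomv, sub_zero,
    map_sum, smul_sum, hdd μ]

theorem dQ_d_ut (hdQd : ∀ μ x, dQ (d μ x) = d μ (dQ x))
    (hdQut : ∀ a, dQ (ut a) = -(Complex.I • ∑ μ, d μ (v a μ))) (c : Fin r) (μ : Fin 4) :
    dQ (d μ (ut c)) = -(Complex.I • d μ (fieldDivergence d v c)) := by
  rw [hdQd, hdQut, map_neg, map_smul, fieldDivergence]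

theorem dQ_u_mul (hdQod : ∀ x ∈ od, ∀ y : A, dQ (x * y) = dQ x * y - x * dQ y)
    (hu : ∀ a, u a ∈ od) (hdQu : ∀ a, dQ (u a) = 0) (b : Fin r) (y : A) :
    dQ (u b * y) = -(u b * dQ y) := by
  rw [hdQod _ (hu b), hdQu, zero_mul, zero_sub]

theorem dQ_wickB (hdQod : ∀ x ∈ od, ∀ y : A, dQ (x * y) = dQ x * y - x * dQ y)
    (hu : ∀ a, u a ∈ od) (hdQu : ∀ a, dQ (u a) = 0) (a : Fin r) : dQ (wickB f u a) = 0 := by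
  simp [wickB, dQ_u_mul hdQod hu hdQu, hdQu]

theorem dQ_wickC' (hdd : ∀ μ ν x, d μ (d ν x) = d ν (d μ x))
    (hdQd : ∀ μ x, dQ (d μ x) = d μ (dQ x))
    (hdQv : ∀ a μ, dQ (v a μ) = (minkEta μ : ℂ) • (Complex.I • d μ (u a)))
    (hdQod : ∀ x ∈ od, ∀ y : A, dQ (x * y) = dQ x * y - x * dQ y)
    (hu : ∀ a, u a ∈ od) (hdQu : ∀ a, dQ (u a) = 0) (a : Fin r) (μ ν : Fin 4) :
    dQ (wickC' f d v u a μ ν) = 0 := by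
  simp [wickC', dQ_u_mul hdQod hu hdQu, dQ_fieldStrength hdd hdQd hdQv]

theorem dQ_wickBVec (hf : ∀ a b c, f a b c = -f a c b)
    (hanti : ∀ x ∈ od, ∀ y ∈ od, x * y = -(y * x))
    (hdLeib : ∀ (μ : Fin 4) (x y : A), d μ (x * y) = d μ x * y + x * d μ y)
    (hdod : ∀ μ, ∀ x ∈ od, d μ x ∈ od)
    (hdQod : ∀ x ∈ od, ∀ y : A, dQ (x * y) = dQ x * y - x * dQ y)
    (hdQv : ∀ a μ, dQ (v a μ) = (minkEta μ : ℂ) • (Complex.I • d μ (u a)))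
    (hu : ∀ a, u a ∈ od) (hdQu : ∀ a, dQ (u a) = 0) (a : Fin r) (μ : Fin 4) :
    dQ (wickBVec f v u a μ) = Complex.I • ((minkEta μ : ℂ) • d μ (wickB f u a)) := by
  have := IsAddTorsionFree.of_isTorsionFree ℂ A
  have hF : ∀ b c, (f a b c : ℂ) = -(f a c b : ℂ) := fun b c => by simp [hf a b c]
  simp only [wickBVec, wickB, map_neg, map_sum, map_smul, dQ_u_mul hdQod hu hdQu, hdQv, hdLeib,
    smul_sum_sum_smul, ← sum_neg_distrib, ← smul_neg]
  refine sum_sum_smul_eq_of_sub_symm hF fun b c => ?_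
  rw [hanti _ (hdod μ _ (hu b)) _ (hu c), hanti _ (hdod μ _ (hu c)) _ (hu b)]
  simp only [mul_smul_comm]
  module

theorem dQ_wickE (hf : ∀ a b c, f a b c = -f a c b) (hcomm : ∀ x ∈ ev, ∀ y : A, Commute x y)
    (hdLeib : ∀ (μ : Fin 4) (x y : A), d μ (x * y) = d μ x * y + x * d μ y)
    (hdQev : ∀ x ∈ ev, ∀ y : A, dQ (x * y) = dQ x * y + x * dQ y)
    (hdQv : ∀ a μ, dQ (v a μ) = (minkEta μ : ℂ) • (Complex.I • d μ (u a)))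
    (hv : ∀ a μ, v a μ ∈ ev) (a : Fin r) (μ ν : Fin 4) :
    dQ (wickE f v a μ ν) = Complex.I • ((minkEta ν : ℂ) • d ν (wickBVec f v u a μ) -
      (minkEta μ : ℂ) • d μ (wickBVec f v u a ν) + wickC' f d v u a μ ν) := by
  have := IsAddTorsionFree.of_isTorsionFree ℂ A
  have hF : ∀ b c, (f a b c : ℂ) = -(f a c b : ℂ) := fun b c => by simp [hf a b c]
  simp only [wickE, wickBVec, wickC', fieldStrength, map_neg, map_sum, map_smul, hdQev _ (hv _ _),
    hdQv, hdLeib, smul_sum_sum_smul, ← sum_neg_distrib, ← sum_sub_distrib,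
    ← sum_add_distrib, ← smul_neg, ← smul_sub, ← smul_add]
  refine sum_sum_smul_eq_of_sub_symm hF fun b c => ?_
  simp only [mul_sub, mul_smul_comm, smul_mul_assoc]
  rw [(hcomm _ (hv c μ) (d ν (u b))).eq, (hcomm _ (hv b μ) (d ν (u c))).eq]
  module

theorem dQ_wickCVec (hdd : ∀ μ ν x, d μ (d ν x) = d ν (d μ x))
    (hdLeib : ∀ (μ : Fin 4) (x y : A), d μ (x * y) = d μ x * y + x * d μ y)
    (hdQd : ∀ μ x, dQ (d μ x) = d μ (dQ x))
    (hdQev : ∀ x ∈ ev, ∀ y : A, dQ (x * y) = dQ x * y + x * dQ y)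
    (hdQod : ∀ x ∈ od, ∀ y : A, dQ (x * y) = dQ x * y - x * dQ y)
    (hv : ∀ a μ, v a μ ∈ ev) (hu : ∀ a, u a ∈ od)
    (hdQv : ∀ a μ, dQ (v a μ) = (minkEta μ : ℂ) • (Complex.I • d μ (u a)))
    (hdQu : ∀ a, dQ (u a) = 0)
    (hdQut : ∀ a, dQ (ut a) = -(Complex.I • ∑ μ, d μ (v a μ)))
    (eomv : ∀ a ν, ∑ μ, (minkEta μ : ℂ) • d μ (d μ (v a ν)) = 0) (a : Fin r) (μ : Fin 4) :
    dQ (wickCVec f d v u ut a μ) = Complex.I • ∑ ν, d ν (wickC' f d v u a μ ν) := by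
  simp only [wickCVec, wickC', map_neg, map_sum, map_smul, ← sum_sum_smul_sum, ← sum_neg_distrib,
    smul_sum_sum_smul, ← smul_neg]
  refine sum_congr rfl fun b _ => sum_congr rfl fun c _ => congrArg _ ?_
  have hdQ : dQ (∑ ν, (minkEta ν : ℂ) • (v b ν * fieldStrength d v c ν μ) -
        (minkEta μ : ℂ) • (u b * d μ (ut c))) =
      Complex.I • ∑ ν, d ν (u b) * fieldStrength d v c ν μ -
        ((minkEta μ : ℂ) * Complex.I) • (u b * d μ (fieldDivergence d v c)) := by
    simp only [map_sub, map_sum, map_smul, hdQev _ (hv _ _), hdQv, dQ_fieldStrength hdd hdQd hdQv,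
      mul_zero, add_zero, dQ_u_mul hdQod hu hdQu, dQ_d_ut hdQd hdQut, smul_mul_assoc, smul_smul,
      ← mul_assoc, minkEta_mul_self, one_mul, mul_neg, mul_smul_comm, ← smul_sum]
    module
  have hd : ∑ ν, d ν (u b * fieldStrength d v c μ ν) =
      ∑ ν, d ν (u b) * fieldStrength d v c μ ν +
        (minkEta μ : ℂ) • (u b * d μ (fieldDivergence d v c)) := by
    rw [← mul_smul_comm, ← sum_d_fieldStrength hdd eomv, mul_sum, ← sum_add_distrib]
    simp only [hdLeib]
  rw [hdQ, sum_neg_distrib, hd]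
  simp only [fieldStrength_swap c μ, mul_neg, sum_neg_distrib]
  module

theorem sum_sum_d_mul_fieldStrength_comm (hcomm : ∀ x ∈ ev, ∀ y : A, Commute x y)
    (hdev : ∀ μ, ∀ x ∈ ev, d μ x ∈ ev) (hv : ∀ a μ, v a μ ∈ ev) (b c : Fin r) :
    ∑ μ, ∑ ν, (minkEta ν : ℂ) • (d μ (v b ν) * fieldStrength d v c ν μ) =
      ∑ μ, ∑ ν, (minkEta ν : ℂ) • (d μ (v c ν) * fieldStrength d v b ν μ) := by
  have hdv : ∀ b μ ν y, Commute (d μ (v b ν)) y := fun b μ ν => hcomm _ (hdev μ _ (hv b ν))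
  simp only [fieldStrength, mul_sub, mul_smul_comm, smul_sub, smul_smul,
    minkEta_mul_self, one_smul, sum_sub_distrib]
  congr 1
  · rw [sum_comm]
    exact sum_congr rfl fun μ _ => sum_congr rfl fun ν _ => (hdv b _ _ _).eq
  · exact sum_congr rfl fun μ _ => sum_congr rfl fun ν _ => by rw [(hdv b μ ν _).eq]

theorem sum_d_wickCVec_summand (hdd : ∀ μ ν x, d μ (d ν x) = d ν (d μ x))
    (hdLeib : ∀ (μ : Fin 4) (x y : A), d μ (x * y) = d μ x * y + x * d μ y)
    (eomv : ∀ a ν, ∑ μ, (minkEta μ : ℂ) • d μ (d μ (v a ν)) = 0)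
    (eomut : ∀ a, ∑ μ, (minkEta μ : ℂ) • d μ (d μ (ut a)) = 0) (b c : Fin r) :
    ∑ μ, d μ (∑ ν, (minkEta ν : ℂ) • (v b ν * fieldStrength d v c ν μ) -
        (minkEta μ : ℂ) • (u b * d μ (ut c))) =
      ∑ μ, ∑ ν, (minkEta ν : ℂ) • (d μ (v b ν) * fieldStrength d v c ν μ) +
        ∑ μ, v b μ * d μ (fieldDivergence d v c) -
        ∑ μ, (minkEta μ : ℂ) • (d μ (u b) * d μ (ut c)) := by
  have hvF : ∑ μ, ∑ ν, (minkEta ν : ℂ) • (v b ν * d μ (fieldStrength d v c ν μ)) =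
      ∑ μ, v b μ * d μ (fieldDivergence d v c) := by
    rw [sum_comm]
    refine sum_congr rfl fun ν _ => ?_
    rw [← smul_sum, ← mul_sum, sum_d_fieldStrength hdd eomv, mul_smul_comm, smul_smul,
      minkEta_mul_self, one_smul]
  have hbox : ∑ μ, (minkEta μ : ℂ) • (u b * d μ (d μ (ut c))) = 0 := by
    simp only [← mul_smul_comm, ← mul_sum, eomut, mul_zero]
  simp only [map_sub, map_sum, map_smul, hdLeib, smul_add, sum_add_distrib, sum_sub_distrib, hvF,
    hbox, add_zero]

theorem dQ_wickD (hf : ∀ a b c, f a b c = -f a c b) (hcomm : ∀ x ∈ ev, ∀ y : A, Commute x y)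
    (hdd : ∀ μ ν x, d μ (d ν x) = d ν (d μ x))
    (hdLeib : ∀ (μ : Fin 4) (x y : A), d μ (x * y) = d μ x * y + x * d μ y)
    (hdev : ∀ μ, ∀ x ∈ ev, d μ x ∈ ev) (hdQd : ∀ μ x, dQ (d μ x) = d μ (dQ x))
    (hdQev : ∀ x ∈ ev, ∀ y : A, dQ (x * y) = dQ x * y + x * dQ y) (hv : ∀ a μ, v a μ ∈ ev)
    (hdQv : ∀ a μ, dQ (v a μ) = (minkEta μ : ℂ) • (Complex.I • d μ (u a)))
    (hdQut : ∀ a, dQ (ut a) = -(Complex.I • ∑ μ, d μ (v a μ)))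
    (eomv : ∀ a ν, ∑ μ, (minkEta μ : ℂ) • d μ (d μ (v a ν)) = 0)
    (eomut : ∀ a, ∑ μ, (minkEta μ : ℂ) • d μ (d μ (ut a)) = 0) (a : Fin r) :
    dQ (wickD f d v ut a) = -(Complex.I • ∑ μ, d μ (wickCVec f d v u ut a μ)) := by
  have := IsAddTorsionFree.of_isTorsionFree ℂ A
  have hF : ∀ b c, (f a b c : ℂ) = -(f a c b : ℂ) := fun b c => by simp [hf a b c]
  have hdQ : ∀ b c, ∑ μ, dQ (v b μ * d μ (ut c)) =
      Complex.I • ∑ μ, (minkEta μ : ℂ) • (d μ (u b) * d μ (ut c)) -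
        Complex.I • ∑ μ, v b μ * d μ (fieldDivergence d v c) := fun b c => by
    rw [smul_sum, smul_sum, ← sum_sub_distrib]
    refine sum_congr rfl fun μ _ => ?_
    rw [hdQev _ (hv b μ), hdQv, dQ_d_ut hdQd hdQut]
    simp only [smul_mul_assoc, mul_neg, mul_smul_comm]
    module
  simp only [wickD, wickCVec, map_sum, map_smul, ← sum_sum_smul_sum, smul_sum_sum_smul,
    ← sum_neg_distrib, ← smul_neg]
  refine sum_sum_smul_eq_of_sub_symm hF fun b c => ?_
  rw [sum_neg_distrib, sum_neg_distrib, hdQ, hdQ, sum_d_wickCVec_summand hdd hdLeib eomv eomut,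
    sum_d_wickCVec_summand hdd hdLeib eomv eomut,
    sum_sum_d_mul_fieldStrength_comm hcomm hdev hv c b]
  module

end YangMills

theorem wick_submonomials_descent_general
    {r : ℕ} {A : Type*} [Ring A] [Algebra ℂ A]
    (f : Fin r → Fin r → Fin r → ℝ)
    (hf2 : ∀ a b c, f a b c = - f a c b)
    (ev od : Set A)
    (hcomm : ∀ x ∈ ev, ∀ y : A, Commute x y)
    (hanti : ∀ x ∈ od, ∀ y ∈ od, x * y = -(y * x))
    (d : Fin 4 → Module.End ℂ A)
    (hdLeib : ∀ (μ : Fin 4) (x y : A), d μ (x * y) = d μ x * y + x * d μ y)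
    (hdd : ∀ μ ν, Commute (d μ) (d ν))
    (hdev : ∀ μ, ∀ x ∈ ev, d μ x ∈ ev)
    (hdod : ∀ μ, ∀ x ∈ od, d μ x ∈ od)
    (dQ : Module.End ℂ A)
    (hdQev : ∀ x ∈ ev, ∀ y : A, dQ (x * y) = dQ x * y + x * dQ y)
    (hdQod : ∀ x ∈ od, ∀ y : A, dQ (x * y) = dQ x * y - x * dQ y)
    (hdQd : ∀ μ, dQ ∘ₗ d μ = d μ ∘ₗ dQ)
    (v : Fin r → Fin 4 → A) (u ut : Fin r → A)
    (hv : ∀ a μ, v a μ ∈ ev) (hu : ∀ a, u a ∈ od)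
    (hdQv : ∀ a μ, dQ (v a μ) = (minkEta μ : ℂ) • (Complex.I • d μ (u a)))
    (hdQu : ∀ a, dQ (u a) = 0)
    (hdQut : ∀ a, dQ (ut a) = -(Complex.I • ∑ μ, d μ (v a μ)))
    (eomv : ∀ a ν, ∑ μ, (minkEta μ : ℂ) • d μ (d μ (v a ν)) = 0)
    (eomut : ∀ a, ∑ μ, (minkEta μ : ℂ) • d μ (d μ (ut a)) = 0) :
    (let Fup : Fin r → Fin 4 → Fin 4 → A := fun c μ ν =>
       (minkEta μ : ℂ) • d μ (v c ν) - (minkEta ν : ℂ) • d ν (v c μ)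
     let Bsc : Fin r → A := fun a =>
       (1 / 2 : ℂ) • ∑ b, ∑ c, (f a b c : ℂ) • (u b * u c)
     let Bup : Fin r → Fin 4 → A := fun a μ =>
       - ∑ b, ∑ c, (f a b c : ℂ) • (u b * v c μ)
     let Cup : Fin r → Fin 4 → A := fun a μ =>
       ∑ b, ∑ c, (f a b c : ℂ) •
         ((∑ ν, (minkEta ν : ℂ) • (v b ν * Fup c ν μ)) -
           (minkEta μ : ℂ) • (u b * d μ (ut c)))
     let Dg : Fin r → A := fun a =>
       ∑ b, ∑ c, (f a b c : ℂ) • ∑ μ, v b μ * d μ (ut c)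
     let Eup : Fin r → Fin 4 → Fin 4 → A := fun a μ ν =>
       ∑ b, ∑ c, (f a b c : ℂ) • (v b μ * v c ν)
     let C' : Fin r → Fin 4 → Fin 4 → A := fun a μ ν =>
       - ∑ b, ∑ c, (f a b c : ℂ) • (u b * Fup c μ ν)
     (∀ a μ, dQ (Bup a μ) = Complex.I • ((minkEta μ : ℂ) • d μ (Bsc a))) ∧
     (∀ a, dQ (Dg a) = -(Complex.I • ∑ μ, d μ (Cup a μ))) ∧
     (∀ a μ, dQ (Cup a μ) = Complex.I • ∑ ν, d ν (C' a μ ν)) ∧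
     (∀ a μ ν, dQ (Eup a μ ν) = Complex.I •
        ((minkEta ν : ℂ) • d ν (Bup a μ) - (minkEta μ : ℂ) • d μ (Bup a ν) + C' a μ ν)) ∧
     (∀ a, dQ (Bsc a) = 0) ∧
     (∀ a μ ν, dQ (C' a μ ν) = 0)) := by
  have hdd' : ∀ μ ν x, d μ (d ν x) = d ν (d μ x) := fun μ ν => LinearMap.congr_fun (hdd μ ν).eq
  have hdQd' : ∀ μ x, dQ (d μ x) = d μ (dQ x) := fun μ => LinearMap.congr_fun (hdQd μ)
  exact ⟨dQ_wickBVec hf2 hanti hdLeib hdod hdQod hdQv hu hdQu,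
    dQ_wickD hf2 hcomm hdd' hdLeib hdev hdQd' hdQev hv hdQv hdQut eomv eomut,
    dQ_wickCVec hdd' hdLeib hdQd' hdQev hdQod hv hu hdQv hdQu hdQut eomv,
    dQ_wickE hf2 hcomm hdLeib hdQev hdQv hv,
    dQ_wickB hdQod hu hdQu,
    dQ_wickC' hdd' hdQd' hdQv hdQod hu hdQu⟩

/-- in the graded jet algebra of pure Yang-Mills (same setting as for the
descent equations), the Wick submonomials
`B_a^μ = −f_{abc} u_b v_c^μ`, `C_a^μ = f_{abc}(v_b^ν F_{cν}{}^μ − u_b ∂^μ ũ_c)`,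
`D_a = f_{abc} v_b^μ ∂_μ ũ_c`, `E_a^{μν} = f_{abc} v_b^μ v_c^ν`,
`C'_a^{μν} = −f_{abc} u_b F_c^{μν}`, `B_a = (1/2) f_{abc} u_b u_c`
satisfy, modulo the equations of motion:
`d_Q B_a^μ = i∂^μ B_a`, `d_Q D_a = −i∂_μ C_a^μ`, `d_Q C_a^μ = i∂_ν C'_a^{μν}`,
`d_Q E_a^{μν} = i(∂^ν B_a^μ − ∂^μ B_a^ν + C'_a^{μν})`, `d_Q B_a = 0`,
`d_Q C'_a^{μν} = 0`. -/
theorem wick_submonomials_descent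
    {r : ℕ} {A : Type*} [Ring A] [Algebra ℂ A]
    (f : Fin r → Fin r → Fin r → ℝ)
    (hf1 : ∀ a b c, f a b c = - f b a c)
    (hf2 : ∀ a b c, f a b c = - f a c b)
    (ev od : Set A)
    (hevev : ∀ x ∈ ev, ∀ y ∈ ev, x * y ∈ ev)
    (hodod : ∀ x ∈ od, ∀ y ∈ od, x * y ∈ ev)
    (hevod : ∀ x ∈ ev, ∀ y ∈ od, x * y ∈ od)
    (hodev : ∀ x ∈ od, ∀ y ∈ ev, x * y ∈ od)
    (hcomm : ∀ x ∈ ev, ∀ y : A, Commute x y)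
    (hanti : ∀ x ∈ od, ∀ y ∈ od, x * y = -(y * x))
    (d : Fin 4 → Module.End ℂ A)
    (hdLeib : ∀ (μ : Fin 4) (x y : A), d μ (x * y) = d μ x * y + x * d μ y)
    (hdd : ∀ μ ν, Commute (d μ) (d ν))
    (hdev : ∀ μ, ∀ x ∈ ev, d μ x ∈ ev)
    (hdod : ∀ μ, ∀ x ∈ od, d μ x ∈ od)
    (dQ : Module.End ℂ A)
    (hdQev : ∀ x ∈ ev, ∀ y : A, dQ (x * y) = dQ x * y + x * dQ y)
    (hdQod : ∀ x ∈ od, ∀ y : A, dQ (x * y) = dQ x * y - x * dQ y)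
    (hdQd : ∀ μ, dQ ∘ₗ d μ = d μ ∘ₗ dQ)
    (v : Fin r → Fin 4 → A) (u ut : Fin r → A)
    (hv : ∀ a μ, v a μ ∈ ev) (hu : ∀ a, u a ∈ od) (hut : ∀ a, ut a ∈ od)
    (hdQv : ∀ a μ, dQ (v a μ) = (minkEta μ : ℂ) • (Complex.I • d μ (u a)))
    (hdQu : ∀ a, dQ (u a) = 0)
    (hdQut : ∀ a, dQ (ut a) = -(Complex.I • ∑ μ, d μ (v a μ)))
    (eomv : ∀ a ν, ∑ μ, (minkEta μ : ℂ) • d μ (d μ (v a ν)) = 0)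
    (eomu : ∀ a, ∑ μ, (minkEta μ : ℂ) • d μ (d μ (u a)) = 0)
    (eomut : ∀ a, ∑ μ, (minkEta μ : ℂ) • d μ (d μ (ut a)) = 0) :
    (let Fup : Fin r → Fin 4 → Fin 4 → A := fun c μ ν =>
       (minkEta μ : ℂ) • d μ (v c ν) - (minkEta ν : ℂ) • d ν (v c μ)
     let Bsc : Fin r → A := fun a =>
       (1 / 2 : ℂ) • ∑ b, ∑ c, (f a b c : ℂ) • (u b * u c)
     let Bup : Fin r → Fin 4 → A := fun a μ =>
       - ∑ b, ∑ c, (f a b c : ℂ) • (u b * v c μ)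
     let Cup : Fin r → Fin 4 → A := fun a μ =>
       ∑ b, ∑ c, (f a b c : ℂ) •
         ((∑ ν, (minkEta ν : ℂ) • (v b ν * Fup c ν μ)) -
           (minkEta μ : ℂ) • (u b * d μ (ut c)))
     let Dg : Fin r → A := fun a =>
       ∑ b, ∑ c, (f a b c : ℂ) • ∑ μ, v b μ * d μ (ut c)
     let Eup : Fin r → Fin 4 → Fin 4 → A := fun a μ ν =>
       ∑ b, ∑ c, (f a b c : ℂ) • (v b μ * v c ν)
     let C' : Fin r → Fin 4 → Fin 4 → A := fun a μ ν =>
       - ∑ b, ∑ c, (f a b c : ℂ) • (u b * Fup c μ ν)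
     (∀ a μ, dQ (Bup a μ) = Complex.I • ((minkEta μ : ℂ) • d μ (Bsc a))) ∧
     (∀ a, dQ (Dg a) = -(Complex.I • ∑ μ, d μ (Cup a μ))) ∧
     (∀ a μ, dQ (Cup a μ) = Complex.I • ∑ ν, d ν (C' a μ ν)) ∧
     (∀ a μ ν, dQ (Eup a μ ν) = Complex.I •
        ((minkEta ν : ℂ) • d ν (Bup a μ) - (minkEta μ : ℂ) • d μ (Bup a ν) + C' a μ ν)) ∧
     (∀ a, dQ (Bsc a) = 0) ∧
     (∀ a μ ν, dQ (C' a μ ν) = 0)) :=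
  wick_submonomials_descent_general f hf2 ev od hcomm hanti d hdLeib hdd hdev hdod dQ hdQev hdQod
    hdQd v u ut hv hu hdQv hdQu hdQut eomv eomut
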